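/- Let â = a1 + a2 ε, b̂ = b1 + b2 ε be dual complex numbers with a1 ∉ ℝ and b1 ∉ ℝ, and suppose some unit dual quaternion satisfies âq̂ = q̂b̂. Then either â = b̂ and the set of unit dual quaternions q̂ with âq̂ = q̂b̂ equals the set of unit dual complex numbers, or â = b̂̄ (componentwise complex conjugate) and that set equals { q̂ j : q̂ a unit dual complex number }. -/

import Mathlib

noncomputable section
open Matrix

abbrev Quat := Quaternion ℝ
abbrev DQ := DualNumber Quat
abbrev DC := DualNumber ℂ

/-- Embedding of a complex number as a quaternion (spanned by 1, i). -/
def toQuat (z : ℂ) : Quat := ⟨z.re, z.im, 0, 0⟩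
/-- The quaternion unit j. -/
def jq : Quat := ⟨0, 0, 1, 0⟩
/-- First complex component of a quaternion q = c₁ + c₂ j. -/
def qc1 (q : Quat) : ℂ := ⟨q.re, q.imI⟩
/-- Second complex component of a quaternion q = c₁ + c₂ j. -/
def qc2 (q : Quat) : ℂ := ⟨q.imJ, q.imK⟩
/-- Embedding of a dual complex number as a dual quaternion. -/
def toDQ (z : DC) : DQ := ⟨toQuat z.fst, toQuat z.snd⟩
/-- Conjugate of a dual quaternion: p̂* = p_st* + p_I* ε. -/
def dconj (p : DQ) : DQ := ⟨star p.fst, star p.snd⟩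
/-- Conjugate of a dual complex number (complex conjugation of both parts). -/
def dcconj (z : DC) : DC := ⟨(starRingEnd ℂ) z.fst, (starRingEnd ℂ) z.snd⟩
/-- The dual quaternion c₁ + c₂ j + (c₃ + c₄ j)ε built from four complex numbers. -/
def mkDQ (a b c d : ℂ) : DQ := ⟨toQuat a + toQuat b * jq, toQuat c + toQuat d * jq⟩

/-!
Write a dual quaternion uniquely as `z + w j` with `z, w` dual complex numbers. Since
`j c = c̄ j`, the equation `â q̂ = q̂ b̂` splits into `â z = z b̂` and `â w = w b̂̄`, and
`q̂* q̂ = z̄ z + w̄ w`. As `b₁ ∉ ℝ`, the dual number `b̂ - b̂̄` has nonzero real part, hence is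
invertible: `â = b̂` forces `w = 0` and `â = b̂̄` forces `z = 0`. Conversely, a unit solution has
`z` or `w` invertible, and cancelling it gives `â = b̂` or `â = b̂̄`.
-/

open scoped ComplexConjugate

@[simp] lemma toQuat_re (c : ℂ) : (toQuat c).re = c.re := rfl
@[simp] lemma toQuat_imI (c : ℂ) : (toQuat c).imI = c.im := rfl
@[simp] lemma toQuat_imJ (c : ℂ) : (toQuat c).imJ = 0 := rfl
@[simp] lemma toQuat_imK (c : ℂ) : (toQuat c).imK = 0 := rfl
@[simp] lemma jq_re : jq.re = 0 := rfl
@[simp] lemma jq_imI : jq.imI = 0 := rfl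
@[simp] lemma jq_imJ : jq.imJ = 1 := rfl
@[simp] lemma jq_imK : jq.imK = 0 := rfl

lemma toQuat_add (c d : ℂ) : toQuat (c + d) = toQuat c + toQuat d := by
  apply Quaternion.ext <;> simp
lemma toQuat_mul (c d : ℂ) : toQuat (c * d) = toQuat c * toQuat d := by
  apply Quaternion.ext <;> simp
lemma star_toQuat (c : ℂ) : star (toQuat c) = toQuat (conj c) := by
  apply Quaternion.ext <;> simp
lemma toQuat_injective : Function.Injective toQuat :=
  fun _ _ h => Complex.ext (congrArg QuaternionAlgebra.re h) (congrArg QuaternionAlgebra.imI h)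

lemma jq_mul_toQuat (c : ℂ) : jq * toQuat c = toQuat (conj c) * jq := by
  apply Quaternion.ext <;> simp
lemma jq_mul_jq : jq * jq = -1 := by apply Quaternion.ext <;> simp <;> rfl
lemma star_jq : star jq = -jq := by apply Quaternion.ext <;> simp

lemma qc1_add_mul_jq (c d : ℂ) : qc1 (toQuat c + toQuat d * jq) = c := by
  apply Complex.ext <;> simp [qc1]
lemma qc2_add_mul_jq (c d : ℂ) : qc2 (toQuat c + toQuat d * jq) = d := by
  apply Complex.ext <;> simp [qc2]
lemma eq_toQuat_add_mul_jq (q : Quat) : q = toQuat (qc1 q) + toQuat (qc2 q) * jq := by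
  apply Quaternion.ext <;> simp [qc1, qc2]

def jdq : DQ := ⟨jq, 0⟩

@[simp] lemma fst_toDQ (z : DC) : (toDQ z).fst = toQuat z.fst := rfl
@[simp] lemma snd_toDQ (z : DC) : (toDQ z).snd = toQuat z.snd := rfl
@[simp] lemma fst_dconj (p : DQ) : (dconj p).fst = star p.fst := rfl
@[simp] lemma snd_dconj (p : DQ) : (dconj p).snd = star p.snd := rfl
@[simp] lemma fst_dcconj (z : DC) : (dcconj z).fst = conj z.fst := rfl
@[simp] lemma snd_dcconj (z : DC) : (dcconj z).snd = conj z.snd := rfl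
@[simp] lemma fst_jdq : jdq.fst = jq := rfl
@[simp] lemma snd_jdq : jdq.snd = 0 := rfl

lemma toDQ_zero : toDQ 0 = 0 := rfl
lemma toDQ_one : toDQ 1 = 1 := rfl
lemma toDQ_add (z w : DC) : toDQ (z + w) = toDQ z + toDQ w :=
  TrivSqZeroExt.ext (toQuat_add _ _) (toQuat_add _ _)
lemma toDQ_mul (z w : DC) : toDQ (z * w) = toDQ z * toDQ w := by
  apply TrivSqZeroExt.ext <;> simp [toQuat_mul, toQuat_add]
lemma toDQ_injective : Function.Injective toDQ :=
  fun _ _ h => TrivSqZeroExt.ext (toQuat_injective (congrArg TrivSqZeroExt.fst h))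
    (toQuat_injective (congrArg TrivSqZeroExt.snd h))

lemma dconj_add (p q : DQ) : dconj (p + q) = dconj p + dconj q := by
  apply TrivSqZeroExt.ext <;> simp
lemma dconj_mul (p q : DQ) : dconj (p * q) = dconj q * dconj p := by
  apply TrivSqZeroExt.ext <;> simp [add_comm]
lemma dconj_toDQ (z : DC) : dconj (toDQ z) = toDQ (dcconj z) := by
  apply TrivSqZeroExt.ext <;> simp [star_toQuat]
lemma dconj_jdq : dconj jdq = -jdq := by
  apply TrivSqZeroExt.ext <;> simp [star_jq]

lemma jdq_mul_toDQ (z : DC) : jdq * toDQ z = toDQ (dcconj z) * jdq := by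
  apply TrivSqZeroExt.ext <;> simp [jq_mul_toQuat]
lemma jdq_mul_jdq : jdq * jdq = -1 := by
  apply TrivSqZeroExt.ext <;> simp [jq_mul_jq]

lemma dcconj_dcconj (z : DC) : dcconj (dcconj z) = z := by
  apply TrivSqZeroExt.ext <;> simp

lemma toDQ_mul_jdq_mul_toDQ (w z : DC) :
    toDQ w * jdq * toDQ z = toDQ (w * dcconj z) * jdq := by
  rw [mul_assoc, jdq_mul_toDQ, ← mul_assoc, ← toDQ_mul]

def dqOfPair (z w : DC) : DQ := toDQ z + toDQ w * jdq

lemma fst_dqOfPair (z w : DC) : (dqOfPair z w).fst = toQuat z.fst + toQuat w.fst * jq := by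
  simp [dqOfPair]
lemma snd_dqOfPair (z w : DC) : (dqOfPair z w).snd = toQuat z.snd + toQuat w.snd * jq := by
  simp [dqOfPair]

lemma dqOfPair_inj {z w z' w' : DC} : dqOfPair z w = dqOfPair z' w' ↔ z = z' ∧ w = w' := by
  refine ⟨fun h => ?_, fun ⟨hz, hw⟩ => hz ▸ hw ▸ rfl⟩
  have h1 := congrArg TrivSqZeroExt.fst h
  have h2 := congrArg TrivSqZeroExt.snd h
  rw [fst_dqOfPair, fst_dqOfPair] at h1
  rw [snd_dqOfPair, snd_dqOfPair] at h2
  exact ⟨TrivSqZeroExt.ext (by simpa [qc1_add_mul_jq] using congrArg qc1 h1)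
      (by simpa [qc1_add_mul_jq] using congrArg qc1 h2),
    TrivSqZeroExt.ext (by simpa [qc2_add_mul_jq] using congrArg qc2 h1)
      (by simpa [qc2_add_mul_jq] using congrArg qc2 h2)⟩

lemma exists_dqOfPair (q : DQ) : ∃ z w, q = dqOfPair z w := by
  refine ⟨.inl (qc1 q.fst) + .inr (qc1 q.snd), .inl (qc2 q.fst) + .inr (qc2 q.snd), ?_⟩
  apply TrivSqZeroExt.ext <;>
    simp [fst_dqOfPair, snd_dqOfPair, ← eq_toQuat_add_mul_jq]

lemma toDQ_eq_dqOfPair (z : DC) : toDQ z = dqOfPair z 0 := by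
  simp [dqOfPair, toDQ_zero]

lemma toDQ_mul_jdq (w : DC) : toDQ w * jdq = dqOfPair 0 w := by
  simp [dqOfPair, toDQ_zero]

lemma toDQ_mul_dqOfPair (a z w : DC) : toDQ a * dqOfPair z w = dqOfPair (a * z) (a * w) := by
  rw [dqOfPair, dqOfPair, mul_add, ← mul_assoc, toDQ_mul, toDQ_mul]

lemma dqOfPair_mul_toDQ (z w b : DC) :
    dqOfPair z w * toDQ b = dqOfPair (z * b) (w * dcconj b) := by
  rw [dqOfPair, dqOfPair, add_mul, toDQ_mul_jdq_mul_toDQ, toDQ_mul, toDQ_mul]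

lemma dconj_dqOfPair (z w : DC) : dconj (dqOfPair z w) = toDQ (dcconj z) - toDQ w * jdq := by
  rw [dqOfPair, dconj_add, dconj_mul, dconj_jdq, dconj_toDQ, dconj_toDQ, neg_mul, jdq_mul_toDQ,
    dcconj_dcconj, sub_eq_add_neg]

lemma dconj_dqOfPair_mul_self (z w : DC) :
    dconj (dqOfPair z w) * dqOfPair z w = toDQ (dcconj z * z + dcconj w * w) := by
  have hjj : toDQ w * jdq * (toDQ w * jdq) = -toDQ (dcconj w * w) := by
    rw [← mul_assoc, toDQ_mul_jdq_mul_toDQ, mul_assoc, jdq_mul_jdq, mul_neg_one, mul_comm]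
  rw [dconj_dqOfPair, dqOfPair, sub_mul, mul_add, mul_add, hjj, toDQ_mul_jdq_mul_toDQ,
    ← mul_assoc, ← toDQ_mul, ← toDQ_mul, mul_comm w, toDQ_add]
  abel

def unitSolutions (a b : DC) : Set DQ := {q | dconj q * q = 1 ∧ toDQ a * q = q * toDQ b}

lemma mem_unitSolutions_dqOfPair_iff (a b z w : DC) :
    dqOfPair z w ∈ unitSolutions a b ↔
      dcconj z * z + dcconj w * w = 1 ∧ a * z = z * b ∧ a * w = w * dcconj b := by
  rw [unitSolutions, Set.mem_ofPred_eq, dconj_dqOfPair_mul_self, toDQ_mul_dqOfPair, dqOfPair_mul_toDQ, dqOfPair_inj, ← toDQ_one,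
    toDQ_injective.eq_iff]

lemma isUnit_iff_fst_ne_zero (z : DC) : IsUnit z ↔ z.fst ≠ 0 :=
  TrivSqZeroExt.isUnit_iff_isUnit_fst.trans isUnit_iff_ne_zero

lemma isUnit_sub_dcconj {b : DC} (hb : b.fst.im ≠ 0) : IsUnit (b - dcconj b) := by
  rw [isUnit_iff_fst_ne_zero, TrivSqZeroExt.fst_sub, fst_dcconj, Complex.sub_conj]
  simpa using hb

lemma eq_or_eq_dcconj_of_intertwine {a b z w : DC} (hu : dcconj z * z + dcconj w * w = 1)
    (hz : a * z = z * b) (hw : a * w = w * dcconj b) : a = b ∨ a = dcconj b := by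
  by_cases hz0 : z.fst = 0
  · have hw0 : w.fst ≠ 0 := by
      intro hw0
      simpa [hz0, hw0] using congrArg TrivSqZeroExt.fst hu
    exact Or.inr (((isUnit_iff_fst_ne_zero w).mpr hw0).mul_left_inj.mp (by rw [hw, mul_comm]))
  · exact Or.inl (((isUnit_iff_fst_ne_zero z).mpr hz0).mul_left_inj.mp (by rw [hz, mul_comm]))

lemma unitSolutions_self {b : DC} (hb : b.fst.im ≠ 0) :
    unitSolutions b b =
      {q : DQ | ∃ z : DC, dcconj z * z = 1 ∧ q = toDQ z} := by
  ext q
  obtain ⟨z, w, rfl⟩ := exists_dqOfPair q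
  rw [mem_unitSolutions_dqOfPair_iff, Set.mem_ofPred_eq]
  simp only [toDQ_eq_dqOfPair, dqOfPair_inj]
  constructor
  · rintro ⟨hu, -, hw⟩
    obtain rfl : w = 0 :=
      (isUnit_sub_dcconj hb).mul_right_eq_zero.mp (by linear_combination hw)
    exact ⟨z, by simpa using hu, rfl, rfl⟩
  · rintro ⟨z, hz, rfl, rfl⟩
    exact ⟨by simpa using hz, mul_comm _ _, by simp⟩

lemma unitSolutions_dcconj {b : DC} (hb : b.fst.im ≠ 0) :
    unitSolutions (dcconj b) b =
      {q : DQ | ∃ z : DC, dcconj z * z = 1 ∧ q = toDQ z * jdq} := by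
  ext q
  obtain ⟨z, w, rfl⟩ := exists_dqOfPair q
  rw [mem_unitSolutions_dqOfPair_iff, Set.mem_ofPred_eq]
  simp only [toDQ_mul_jdq, dqOfPair_inj]
  constructor
  · rintro ⟨hu, hz, -⟩
    obtain rfl : z = 0 :=
      (isUnit_sub_dcconj hb).mul_right_eq_zero.mp (by linear_combination -hz)
    exact ⟨w, by simpa using hu, rfl, rfl⟩
  · rintro ⟨w, hw, rfl, rfl⟩
    exact ⟨by simpa using hw, by simp, mul_comm _ _⟩

theorem stmt10_general (a b : DC) (hb : (b.fst).im ≠ 0)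
    (h : ∃ q : DQ, dconj q * q = 1 ∧ toDQ a * q = q * toDQ b) :
    (a = b ∧
      {q : DQ | dconj q * q = 1 ∧ toDQ a * q = q * toDQ b} =
        {q : DQ | ∃ z : DC, dcconj z * z = 1 ∧ q = toDQ z}) ∨
    (a = dcconj b ∧
      {q : DQ | dconj q * q = 1 ∧ toDQ a * q = q * toDQ b} =
        {q : DQ | ∃ z : DC, dcconj z * z = 1 ∧ q = toDQ z * ⟨jq, 0⟩}) := by
  obtain ⟨q, hq⟩ := h
  obtain ⟨z, w, rfl⟩ := exists_dqOfPair q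
  obtain ⟨hu, hz, hw⟩ := (mem_unitSolutions_dqOfPair_iff a b z w).mp hq
  rcases eq_or_eq_dcconj_of_intertwine hu hz hw with rfl | rfl
  · exact Or.inl ⟨rfl, unitSolutions_self hb⟩
  · exact Or.inr ⟨rfl, unitSolutions_dcconj hb⟩

theorem stmt10 (a b : DC) (ha : (a.fst).im ≠ 0) (hb : (b.fst).im ≠ 0)
    (h : ∃ q : DQ, dconj q * q = 1 ∧ toDQ a * q = q * toDQ b) :
    (a = b ∧
      {q : DQ | dconj q * q = 1 ∧ toDQ a * q = q * toDQ b} =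
        {q : DQ | ∃ z : DC, dcconj z * z = 1 ∧ q = toDQ z}) ∨
    (a = dcconj b ∧
      {q : DQ | dconj q * q = 1 ∧ toDQ a * q = q * toDQ b} =
        {q : DQ | ∃ z : DC, dcconj z * z = 1 ∧ q = toDQ z * ⟨jq, 0⟩}) :=
  stmt10_general a b hb h
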